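/- Let W be a finite real reflection group on V and let u, v ∈ W with uv = vu and ℓ_T(uv) = ℓ_T(u) + ℓ_T(v). If t, t' are reflections with t ≤_T u and t' ≤_T v, then t and t' commute. -/

import Mathlib

/-!
By Carter's lemma the reflection length of `w ∈ W` is `dim Mov(w)`, where
`Mov(w) = im (w - 1) = Fix(w)ᗮ`. Hence `t ≤_T u` forces `Mov(t) ⊆ Mov(u)`, and
`ℓ_T(uv) = ℓ_T(u) + ℓ_T(v)` forces `Mov(u) ∩ Mov(v) = 0`. As `v` commutes with `u`, it preserves
`Mov(u)`, so `(v - 1) Mov(u) ⊆ Mov(u) ∩ Mov(v) = 0`: `v` fixes `Mov(u)`, i.e. `Mov(u) ⟂ Mov(v)`.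
So `Mov(t) ⟂ Mov(t')`, and two isometries with orthogonal moved spaces commute.

In Carter's lemma, `dim Mov ≤ ℓ_T` is subadditivity of `Mov`. Conversely, a nontrivial `w` has a
root `α ∈ Mov(w)`: otherwise some point of `Fix(w)` lies on no reflecting hyperplane, and such
regular points have trivial stabiliser. Then `s_α w` fixes `Fix(w)` and the vector `y` with
`w y - y = α` (Brady–Watt), so `dim Mov(s_α w) < dim Mov(w)`. Triviality of regular stabilisers
is the simple-system argument: for a minimal set `Δ` of positive roots whose cone contains all
positive roots, each `s_δ` permutes the other positive roots; hence the simple reflections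
generate, the deletion condition holds, and a shortest word in them fixing a regular point is
empty.
-/

/-- The minimal length of an expression of `w` as a product of elements of `T`. -/
noncomputable def wordLength {G : Type*} [Group G] (T : Set G) (w : G) : ℕ :=
  sInf {n | ∃ l : List G, (∀ t ∈ l, t ∈ T) ∧ l.length = n ∧ l.prod = w}

variable {V : Type*} [NormedAddCommGroup V] [InnerProductSpace ℝ V] [FiniteDimensional ℝ V]

/-- The fixed space `V^f` of a linear isometry. -/
noncomputable def fixedSpace (f : V ≃ₗᵢ[ℝ] V) : Submodule ℝ V :=
  LinearMap.ker (f.toLinearEquiv.toLinearMap - LinearMap.id)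

/-- The moved space `Mov(f) = im (f - 1)` of a linear isometry. -/
noncomputable def movedSpace (f : V ≃ₗᵢ[ℝ] V) : Submodule ℝ V :=
  LinearMap.range (f.toLinearEquiv.toLinearMap - LinearMap.id)

/-- `f` is an (orthogonal, hyperplane) reflection: the orthogonal reflection in the
hyperplane orthogonal to some nonzero vector `α` (a root of `f`). -/
noncomputable def IsHypReflection (f : V ≃ₗᵢ[ℝ] V) : Prop :=
  ∃ α : V, α ≠ 0 ∧ f = Submodule.reflection (ℝ ∙ α)ᗮ

open Module Submodule RealInnerProductSpace

section MovedSpace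

variable {E : Type*} [NormedAddCommGroup E] [InnerProductSpace ℝ E] {f g : E ≃ₗᵢ[ℝ] E}

lemma mem_fixedSpace {v : E} : v ∈ fixedSpace f ↔ f v = v := by
  simp [fixedSpace, sub_eq_zero]

lemma mem_movedSpace {v : E} : v ∈ movedSpace f ↔ ∃ w, f w - w = v := by
  simp [movedSpace]

lemma sub_mem_movedSpace (f : E ≃ₗᵢ[ℝ] E) (w : E) : f w - w ∈ movedSpace f :=
  mem_movedSpace.2 ⟨w, rfl⟩

lemma orthogonal_movedSpace (f : E ≃ₗᵢ[ℝ] E) : (movedSpace f)ᗮ = fixedSpace f := by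
  ext v
  have hinner (w : E) : ⟪f w - w, v⟫ = ⟪w, f.symm v - v⟫ := by
    rw [inner_sub_left, inner_sub_right, f.inner_map_eq_flip]
  rw [mem_orthogonal, mem_fixedSpace, ← f.eq_symm_apply, eq_comm, ← sub_eq_zero]
  refine ⟨fun h ↦ inner_self_eq_zero (𝕜 := ℝ).1 ?_, fun h _ hu ↦ ?_⟩
  · rw [← hinner]
    exact h _ (sub_mem_movedSpace f _)
  · obtain ⟨w, rfl⟩ := mem_movedSpace.1 hu
    rw [hinner, h, inner_zero_right]

lemma movedSpace_mul_le (f g : E ≃ₗᵢ[ℝ] E) : movedSpace (f * g) ≤ movedSpace f ⊔ movedSpace g := by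
  rintro _ ⟨w, rfl⟩
  convert add_mem_sup (sub_mem_movedSpace f (g w)) (sub_mem_movedSpace g w) using 1
  simp

@[simp]
lemma movedSpace_one : movedSpace (1 : E ≃ₗᵢ[ℝ] E) = ⊥ := by
  rw [eq_bot_iff]
  rintro _ ⟨w, rfl⟩
  simp

lemma sub_mem_inf_movedSpace_of_commute (hfg : Commute f g) {z : E} (hz : z ∈ movedSpace f) :
    g z - z ∈ movedSpace f ⊓ movedSpace g := by
  obtain ⟨w, rfl⟩ := mem_movedSpace.1 hz
  refine mem_inf.2 ⟨?_, sub_mem_movedSpace g _⟩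
  have hw : f (g w) = g (f w) := DFunLike.congr_fun hfg.eq w
  convert sub_mem_movedSpace f (g w - w) using 1
  rw [map_sub, map_sub, hw]
  abel

lemma isOrtho_movedSpace_of_commute (hfg : Commute f g) (h : movedSpace f ⊓ movedSpace g = ⊥) :
    movedSpace f ⟂ movedSpace g := by
  rw [isOrtho_iff_le, orthogonal_movedSpace]
  intro z hz
  have := sub_mem_inf_movedSpace_of_commute hfg hz
  rwa [h, mem_bot, sub_eq_zero, ← mem_fixedSpace] at this

lemma commute_of_isOrtho_movedSpace (h : movedSpace f ⟂ movedSpace g) : Commute f g := by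
  have hf (v : E) : f (g v - v) = g v - v := by
    rw [← mem_fixedSpace, ← orthogonal_movedSpace]
    exact isOrtho_iff_le.1 h.symm (sub_mem_movedSpace g v)
  have hg (v : E) : g (f v - v) = f v - v := by
    rw [← mem_fixedSpace, ← orthogonal_movedSpace]
    exact isOrtho_iff_le.1 h (sub_mem_movedSpace f v)
  refine LinearIsometryEquiv.ext fun v ↦ ?_
  have := congrArg₂ (· - ·) (hf v) (hg v)
  simp only [map_sub] at this
  change f (g v) = g (f v)
  linear_combination (norm := module) this

section FiniteDimensional

variable [FiniteDimensional ℝ E]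

lemma orthogonal_fixedSpace (f : E ≃ₗᵢ[ℝ] E) : (fixedSpace f)ᗮ = movedSpace f := by
  rw [← orthogonal_movedSpace, orthogonal_orthogonal]

lemma finrank_movedSpace_add_finrank_fixedSpace (f : E ≃ₗᵢ[ℝ] E) :
    finrank ℝ (movedSpace f) + finrank ℝ (fixedSpace f) = finrank ℝ E := by
  rw [← orthogonal_movedSpace, finrank_add_finrank_orthogonal]

lemma finrank_movedSpace_mul_le (f g : E ≃ₗᵢ[ℝ] E) :
    finrank ℝ (movedSpace (f * g)) ≤ finrank ℝ (movedSpace f) + finrank ℝ (movedSpace g) :=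
  (finrank_mono (movedSpace_mul_le f g)).trans (finrank_add_le_finrank_add_finrank _ _)

lemma movedSpace_mul_eq_sup_of_finrank_mul_eq_add
    (h : finrank ℝ (movedSpace (f * g)) = finrank ℝ (movedSpace f) + finrank ℝ (movedSpace g)) :
    movedSpace (f * g) = movedSpace f ⊔ movedSpace g :=
  eq_of_le_of_finrank_le (movedSpace_mul_le f g) (h ▸ finrank_add_le_finrank_add_finrank _ _)

lemma inf_movedSpace_eq_bot_of_finrank_mul_eq_add
    (h : finrank ℝ (movedSpace (f * g)) = finrank ℝ (movedSpace f) + finrank ℝ (movedSpace g)) :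
    movedSpace f ⊓ movedSpace g = ⊥ := by
  have hsup := finrank_sup_add_finrank_inf_eq (movedSpace f) (movedSpace g)
  rw [← movedSpace_mul_eq_sup_of_finrank_mul_eq_add h, h] at hsup
  exact finrank_eq_zero.1 (by omega)

lemma movedSpace_le_of_finrank_add_finrank_inv_mul
    (h : finrank ℝ (movedSpace f) + finrank ℝ (movedSpace (f⁻¹ * g)) = finrank ℝ (movedSpace g)) :
    movedSpace f ≤ movedSpace g := by
  have hsup := movedSpace_mul_eq_sup_of_finrank_mul_eq_add (f := f) (g := f⁻¹ * g)
    (by rw [mul_inv_cancel_left]; exact h.symm)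
  rw [mul_inv_cancel_left] at hsup
  exact hsup ▸ le_sup_left

end FiniteDimensional

end MovedSpace

section RootReflection

variable {E : Type*} [NormedAddCommGroup E] [InnerProductSpace ℝ E]

noncomputable def rootReflection (α : E) : E ≃ₗᵢ[ℝ] E := reflection (ℝ ∙ α)ᗮ

lemma rootReflection_apply (α y : E) :
    rootReflection α y = y - (2 * ⟪α, y⟫ / ‖α‖ ^ 2) • α := by
  rw [rootReflection, reflection_orthogonal_apply, reflection_singleton_apply]
  simp only [RCLike.ofReal_real_eq_id, id]
  module

lemma rootReflection_apply_of_norm_eq_one {α : E} (hα : ‖α‖ = 1) (y : E) :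
    rootReflection α y = y - (2 * ⟪α, y⟫) • α := by
  rw [rootReflection_apply, hα, one_pow, div_one]

lemma rootReflection_self (α : E) : rootReflection α α = -α :=
  reflection_orthogonalComplement_singleton_eq_neg α

lemma rootReflection_of_inner_eq_zero {α y : E} (h : ⟪α, y⟫ = 0) : rootReflection α y = y :=
  reflection_mem_subspace_eq_self (mem_orthogonal_singleton_iff_inner_right.2 h)

@[simp]
lemma rootReflection_mul_self (α : E) : rootReflection α * rootReflection α = 1 :=
  reflection_mul_reflection _

@[simp]
lemma rootReflection_inv (α : E) : (rootReflection α)⁻¹ = rootReflection α :=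
  reflection_inv

lemma rootReflection_smul {c : ℝ} (hc : c ≠ 0) (α : E) :
    rootReflection (c • α) = rootReflection α := by
  simp only [rootReflection, span_singleton_smul_eq (IsUnit.mk0 c hc)]

lemma rootReflection_neg (α : E) : rootReflection (-α) = rootReflection α := by
  simpa using rootReflection_smul (neg_ne_zero.2 one_ne_zero) α

lemma mul_rootReflection_mul_inv (g : E ≃ₗᵢ[ℝ] E) (α : E) :
    g * rootReflection α * g⁻¹ = rootReflection (g α) := by
  ext y
  simp only [LinearIsometryEquiv.coe_mul, LinearIsometryEquiv.coe_inv, Function.comp_apply,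
    rootReflection_apply, map_sub, map_smul, LinearIsometryEquiv.apply_symm_apply,
    ← g.inner_map_eq_flip, g.norm_map]

lemma rootReflection_sub_apply (f : E ≃ₗᵢ[ℝ] E) (x : E) : rootReflection (f x - x) (f x) = x :=
  reflection_sub (f.norm_map x)

lemma movedSpace_rootReflection (α : E) : movedSpace (rootReflection α) = ℝ ∙ α := by
  refine le_antisymm ?_ ?_
  · rintro _ ⟨w, rfl⟩
    change rootReflection α w - w ∈ ℝ ∙ α
    rw [rootReflection_apply, sub_sub_cancel_left]
    exact neg_mem (smul_mem _ _ (mem_span_singleton_self α))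
  · rw [span_singleton_le_iff_mem]
    convert sub_mem_movedSpace (rootReflection α) (-(1 / 2 : ℝ) • α) using 1
    rw [map_smul, rootReflection_self]
    module

lemma finrank_movedSpace_rootReflection {α : E} (hα : α ≠ 0) :
    finrank ℝ (movedSpace (rootReflection α)) = 1 := by
  rw [movedSpace_rootReflection, finrank_span_singleton hα]

lemma eq_or_eq_neg_of_rootReflection_eq {α β : E} (hα : ‖α‖ = 1) (hβ : ‖β‖ = 1)
    (h : rootReflection α = rootReflection β) : β = α ∨ β = -α := by
  have hβα : β = ⟪α, β⟫ • α := by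
    have := rootReflection_self β
    rw [← h, rootReflection_apply_of_norm_eq_one hα] at this
    linear_combination (norm := module) (1 / 2 : ℝ) • this
  have hc : |⟪α, β⟫| = 1 := by
    simpa [norm_smul, hα, hβ] using (congrArg norm hβα).symm
  rcases abs_eq zero_le_one |>.1 hc with hc | hc
  · exact .inl (by rw [hβα, hc, one_smul])
  · exact .inr (by rw [hβα, hc, neg_one_smul])

lemma IsHypReflection.exists_norm_eq_one {f : E ≃ₗᵢ[ℝ] E} (hf : IsHypReflection f) :
    ∃ α : E, ‖α‖ = 1 ∧ f = rootReflection α := by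
  obtain ⟨α, hα, rfl⟩ := hf
  exact ⟨‖α‖⁻¹ • α, norm_smul_inv_norm hα,
    (rootReflection_smul (inv_ne_zero (norm_ne_zero_iff.2 hα)) α).symm⟩

lemma IsHypReflection.finrank_movedSpace {f : E ≃ₗᵢ[ℝ] E} (hf : IsHypReflection f) :
    finrank ℝ (movedSpace f) = 1 := by
  obtain ⟨α, hα, rfl⟩ := hf
  exact finrank_movedSpace_rootReflection hα

variable [FiniteDimensional ℝ E]

lemma finrank_movedSpace_list_prod_le {l : List (E ≃ₗᵢ[ℝ] E)} (hl : ∀ t ∈ l, IsHypReflection t) :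
    finrank ℝ (movedSpace l.prod) ≤ l.length := by
  induction l with
  | nil => rw [List.prod_nil, movedSpace_one, finrank_bot]; rfl
  | cons t l ih =>
    have := finrank_movedSpace_mul_le t l.prod
    rw [(hl t (List.mem_cons_self ..)).finrank_movedSpace] at this
    have := ih fun t ht ↦ hl t (List.mem_cons_of_mem _ ht)
    rw [List.prod_cons, List.length_cons]
    omega

lemma finrank_movedSpace_rootReflection_mul_lt {f : E ≃ₗᵢ[ℝ] E} {α : E} (hα0 : α ≠ 0)
    (hα : α ∈ movedSpace f) :
    finrank ℝ (movedSpace (rootReflection α * f)) < finrank ℝ (movedSpace f) := by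
  obtain ⟨y, rfl⟩ := mem_movedSpace.1 hα
  have hle : fixedSpace f ≤ fixedSpace (rootReflection (f y - y) * f) := by
    intro v hv
    have hperp : ⟪f y - y, v⟫ = 0 :=
      inner_right_of_mem_orthogonal hα (orthogonal_movedSpace f ▸ hv)
    rw [mem_fixedSpace] at hv ⊢
    rw [LinearIsometryEquiv.coe_mul, Function.comp_apply, hv, rootReflection_of_inner_eq_zero hperp]
  have hy : y ∈ fixedSpace (rootReflection (f y - y) * f) :=
    mem_fixedSpace.2 (rootReflection_sub_apply f y)
  have hy' : y ∉ fixedSpace f := fun h ↦ hα0 (by rw [mem_fixedSpace.1 h, sub_self])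
  have := finrank_lt_finrank_of_lt (lt_of_le_of_ne hle fun h ↦ hy' (h ▸ hy))
  have := finrank_movedSpace_add_finrank_fixedSpace f
  have := finrank_movedSpace_add_finrank_fixedSpace (rootReflection (f y - y) * f)
  omega

end RootReflection

section PointedConeHull

variable {E : Type*} [NormedAddCommGroup E] [InnerProductSpace ℝ E]

lemma inner_nonneg_of_mem_hull {S : Set E} {y z : E} (hS : ∀ s ∈ S, 0 ≤ ⟪y, s⟫)
    (hz : z ∈ PointedCone.hull ℝ S) : 0 ≤ ⟪y, z⟫ := by
  induction hz using Submodule.span_induction with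
  | mem s hs => exact hS s hs
  | zero => simp
  | add a b _ _ ha hb => rw [inner_add_right]; positivity
  | smul c a _ ha =>
    change 0 ≤ ⟪y, (c : ℝ) • a⟫
    rw [real_inner_smul_right]; exact mul_nonneg c.2 ha

lemma eq_zero_of_mem_hull_of_inner_eq_zero {S : Set E} {y z : E} (hS : ∀ s ∈ S, 0 < ⟪y, s⟫)
    (hz : z ∈ PointedCone.hull ℝ S) (hyz : ⟪y, z⟫ = 0) : z = 0 := by
  suffices h : ∀ z ∈ PointedCone.hull ℝ S, 0 ≤ ⟪y, z⟫ ∧ (⟪y, z⟫ = 0 → z = 0) from (h z hz).2 hyz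
  intro z hz
  induction hz using Submodule.span_induction with
  | mem s hs => exact ⟨(hS s hs).le, fun h ↦ absurd h (hS s hs).ne'⟩
  | zero => simp
  | add a b _ _ ha hb =>
    rw [inner_add_right]
    refine ⟨add_nonneg ha.1 hb.1, fun h ↦ ?_⟩
    rw [ha.2 (by linarith [ha.1, hb.1]), hb.2 (by linarith [ha.1, hb.1]), add_zero]
  | smul c a _ ha =>
    change 0 ≤ ⟪y, (c : ℝ) • a⟫ ∧ (⟪y, (c : ℝ) • a⟫ = 0 → (c : ℝ) • a = 0)
    rw [real_inner_smul_right, mul_eq_zero]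
    exact ⟨mul_nonneg c.2 ha.1, fun h ↦ h.elim (fun hc ↦ by simp [hc]) fun h ↦ by simp [ha.2 h]⟩

end PointedConeHull

section SimpleSystem

variable {E : Type*} [NormedAddCommGroup E] [InnerProductSpace ℝ E]

structure IsUnitRootSystem (Φ : Finset E) : Prop where
  norm_eq_one : ∀ α ∈ Φ, ‖α‖ = 1
  rootReflection_mem : ∀ α ∈ Φ, ∀ β ∈ Φ, rootReflection α β ∈ Φ

structure IsSimpleSystem (Φ : Finset E) (x : E) (Δ : Finset E) : Prop where
  mem_pos : ∀ δ ∈ Δ, δ ∈ Φ ∧ 0 < ⟪x, δ⟫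
  mem_hull : ∀ β ∈ Φ, 0 < ⟪x, β⟫ → β ∈ PointedCone.hull ℝ (Δ : Set E)
  notMem_hull_diff : ∀ δ ∈ Δ, δ ∉ PointedCone.hull ℝ ((Δ : Set E) \ {δ})

lemma exists_isSimpleSystem (Φ : Finset E) (x : E) : ∃ Δ, IsSimpleSystem Φ x Δ := by
  classical
  set P := Φ.filter (0 < ⟪x, ·⟫)
  obtain ⟨Δ, hΔ, hmin⟩ := (P.powerset.filter fun S : Finset E ↦ ∀ β ∈ P,
      β ∈ PointedCone.hull ℝ (S : Set E)).exists_min_image Finset.card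
    ⟨P, Finset.mem_filter.2 ⟨Finset.mem_powerset_self P,
      fun β hβ ↦ PointedCone.subset_hull (Finset.mem_coe.2 hβ)⟩⟩
  rw [Finset.mem_filter, Finset.mem_powerset] at hΔ
  refine ⟨Δ, fun δ hδ ↦ Finset.mem_filter.1 (hΔ.1 hδ), fun β hβ hβx ↦ hΔ.2 β (by simp [P, hβ, hβx]),
    fun δ hδ hmem ↦ ?_⟩
  have hhull : PointedCone.hull ℝ ((Δ.erase δ : Finset E) : Set E) = PointedCone.hull ℝ Δ := by
    rw [Finset.coe_erase, PointedCone.hull, ← span_insert_eq_span hmem, Set.insert_sdiff_singleton,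
      Set.insert_eq_of_mem (by simpa using hδ)]
  have := hmin (Δ.erase δ) (Finset.mem_filter.2 ⟨Finset.mem_powerset.2
    ((Finset.erase_subset δ Δ).trans hΔ.1), fun β hβ ↦ hhull ▸ hΔ.2 β hβ⟩)
  exact (Finset.card_erase_lt_of_mem hδ).not_ge this

variable {Φ : Finset E} {x : E} {Δ : Finset E}

lemma IsUnitRootSystem.neg_mem (hΦ : IsUnitRootSystem Φ) {α : E} (hα : α ∈ Φ) :
    -α ∈ Φ :=
  rootReflection_self α ▸ hΦ.rootReflection_mem α hα α hα

lemma IsUnitRootSystem.list_prod_apply_mem (hΦ : IsUnitRootSystem Φ)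
    {l : List (E ≃ₗᵢ[ℝ] E)} (hl : ∀ s ∈ l, s ∈ rootReflection '' (Φ : Set E)) {β : E}
    (hβ : β ∈ Φ) : l.prod β ∈ Φ := by
  induction l with
  | nil => exact hβ
  | cons s l ih =>
    obtain ⟨α, hα, rfl⟩ := hl s (List.mem_cons_self ..)
    exact hΦ.rootReflection_mem α hα _ (ih fun s hs ↦ hl s (List.mem_cons_of_mem _ hs))

lemma IsSimpleSystem.exists_eq_smul_add (hΔ : IsSimpleSystem Φ x Δ) {δ β : E} (hδ : δ ∈ Δ)
    (hβ : β ∈ Φ) (hβx : 0 < ⟪x, β⟫) :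
    ∃ a : ℝ, 0 ≤ a ∧ ∃ z ∈ PointedCone.hull ℝ ((Δ : Set E) \ {δ}), β = a • δ + z := by
  have hβ' := hΔ.mem_hull β hβ hβx
  rw [← Set.insert_eq_of_mem (Finset.mem_coe.2 hδ), ← Set.insert_sdiff_singleton,
    PointedCone.hull, mem_span_insert] at hβ'
  obtain ⟨a, z, hz, rfl⟩ := hβ'
  exact ⟨a, a.2, z, hz, rfl⟩

lemma IsSimpleSystem.inner_rootReflection_pos (hΦ : IsUnitRootSystem Φ)
    (hx : ∀ α ∈ Φ, ⟪x, α⟫ ≠ 0) (hΔ : IsSimpleSystem Φ x Δ) {δ β : E} (hδ : δ ∈ Δ)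
    (hβ : β ∈ Φ) (hβx : 0 < ⟪x, β⟫) (hne : β ≠ δ) : 0 < ⟪x, rootReflection δ β⟫ := by
  obtain ⟨hδΦ, hδx⟩ := hΔ.mem_pos δ hδ
  set γ := rootReflection δ β
  have hγΦ : γ ∈ Φ := hΦ.rootReflection_mem δ hδΦ β hβ
  by_contra hγx
  have hγx' : 0 < ⟪x, -γ⟫ := by
    rw [inner_neg_right, neg_pos]
    exact (not_lt.1 hγx).lt_of_ne (hx γ hγΦ)
  have hΔpos : ∀ s ∈ (Δ : Set E) \ {δ}, 0 < ⟪x, s⟫ := fun s hs ↦ (hΔ.mem_pos s hs.1).2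
  obtain ⟨a, ha, β₁, hβ₁, hβeq⟩ := hΔ.exists_eq_smul_add hδ hβ hβx
  obtain ⟨b, hb, γ₁, hγ₁, hγeq⟩ := hΔ.exists_eq_smul_add hδ (hΦ.neg_mem hγΦ) hγx'
  set r := 2 * ⟪δ, β⟫ - a - b
  have hsum : β₁ + γ₁ = r • δ := by
    have hγ : γ = β - (2 * ⟪δ, β⟫) • δ :=
      rootReflection_apply_of_norm_eq_one (hΦ.norm_eq_one δ hδΦ) β
    rw [hγ] at hγeq
    linear_combination (norm := module) -hγeq - hβeq
  have hβ₁x := inner_nonneg_of_mem_hull (fun s hs ↦ (hΔpos s hs).le) hβ₁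
  have hγ₁x := inner_nonneg_of_mem_hull (fun s hs ↦ (hΔpos s hs).le) hγ₁
  -- either `β` is a multiple of `δ`, or `δ` lies in the cone of the other simple roots
  rcases le_or_gt r 0 with hr | hr
  · have hxsum := congrArg (⟪x, ·⟫) hsum
    simp only [inner_add_right, real_inner_smul_right] at hxsum
    have hβ₁0 : β₁ = 0 := eq_zero_of_mem_hull_of_inner_eq_zero hΔpos hβ₁
      (by nlinarith [mul_nonpos_of_nonpos_of_nonneg hr hδx.le])
    rw [hβ₁0, add_zero] at hβeq
    have ha1 : a = 1 := by
      simpa [hβeq, norm_smul, abs_of_nonneg ha, hΦ.norm_eq_one δ hδΦ] using hΦ.norm_eq_one β hβ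
    exact hne (by rw [hβeq, ha1, one_smul])
  · refine hΔ.notMem_hull_diff δ hδ ((PointedCone.smul_mem_iff _ hr).1 ?_)
    exact hsum ▸ add_mem hβ₁ hγ₁

lemma IsSimpleSystem.rootReflection_mem_closure (hΦ : IsUnitRootSystem Φ)
    (hx : ∀ α ∈ Φ, ⟪x, α⟫ ≠ 0) (hΔ : IsSimpleSystem Φ x Δ) {β : E} (hβ : β ∈ Φ)
    (hβx : 0 < ⟪x, β⟫) : rootReflection β ∈ Subgroup.closure (rootReflection '' (Δ : Set E)) := by
  classical
  set W₀ := Subgroup.closure (rootReflection '' (Δ : Set E))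
  have hsW₀ {δ : E} (hδ : δ ∈ Δ) : rootReflection δ ∈ W₀ := Subgroup.subset_closure ⟨δ, hδ, rfl⟩
  -- a positive root `γ` in the `W₀`-orbit of `β` minimising `⟪x, γ⟫` is simple
  obtain ⟨_, hγ, hmin⟩ := (Φ.filter fun γ ↦ 0 < ⟪x, γ⟫ ∧ ∃ g ∈ W₀, g β = γ).exists_min_image
    (⟪x, ·⟫) ⟨β, Finset.mem_filter.2 ⟨hβ, hβx, 1, one_mem _, rfl⟩⟩
  obtain ⟨hγΦ, hγx, g, hg, rfl⟩ := Finset.mem_filter.1 hγ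
  obtain ⟨δ, hδ, hδγ⟩ : ∃ δ ∈ Δ, 0 < ⟪δ, g β⟫ := by
    by_contra! h
    have := inner_nonneg_of_mem_hull (y := -g β)
      (fun s hs ↦ by rw [inner_neg_left, real_inner_comm]; linarith [h s hs])
      (hΔ.mem_hull _ hγΦ hγx)
    rw [inner_neg_left, real_inner_self_eq_norm_sq, hΦ.norm_eq_one _ hγΦ] at this
    norm_num at this
  obtain hδeq | hne := eq_or_ne (g β) δ
  · have hconj : rootReflection β = g⁻¹ * rootReflection (g β) * g := by
      rw [← mul_rootReflection_mul_inv]; group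
    rw [hconj, hδeq]
    exact mul_mem (mul_mem (inv_mem hg) (hsW₀ hδ)) hg
  · have hδΦ := (hΔ.mem_pos δ hδ).1
    have := hmin _ (Finset.mem_filter.2 ⟨hΦ.rootReflection_mem δ hδΦ _ hγΦ,
      hΔ.inner_rootReflection_pos hΦ hx hδ hγΦ hγx hne, _, mul_mem (hsW₀ hδ) hg, rfl⟩)
    rw [rootReflection_apply_of_norm_eq_one (hΦ.norm_eq_one δ hδΦ), inner_sub_right,
      real_inner_smul_right] at this
    nlinarith [(hΔ.mem_pos δ hδ).2]

lemma IsSimpleSystem.exists_list_prod_eq_mul_rootReflection (hΦ : IsUnitRootSystem Φ)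
    (hx : ∀ α ∈ Φ, ⟪x, α⟫ ≠ 0) (hΔ : IsSimpleSystem Φ x Δ) {η : E} (hη : η ∈ Φ)
    (hηx : 0 < ⟪x, η⟫) {l : List (E ≃ₗᵢ[ℝ] E)} (hl : ∀ s ∈ l, s ∈ rootReflection '' (Δ : Set E))
    (hneg : ⟪x, l.prod η⟫ < 0) :
    ∃ l' : List (E ≃ₗᵢ[ℝ] E), (∀ s ∈ l', s ∈ rootReflection '' (Δ : Set E)) ∧
      l'.length + 1 = l.length ∧ l'.prod = l.prod * rootReflection η := by
  induction l with
  | nil => exact absurd hneg (not_lt.2 hηx.le)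
  | cons s l ih =>
    obtain ⟨ρ, hρ, rfl⟩ := hl _ (List.mem_cons_self ..)
    have hl' : ∀ s ∈ l, s ∈ rootReflection '' (Δ : Set E) :=
      fun s hs ↦ hl s (List.mem_cons_of_mem _ hs)
    have hlη : l.prod η ∈ Φ := hΦ.list_prod_apply_mem
      (fun s hs ↦ Set.image_mono (fun δ hδ ↦ (hΔ.mem_pos δ hδ).1) (hl' s hs)) hη
    rcases (hx _ hlη).lt_or_gt with hlt | hgt
    · obtain ⟨l', hl's, hlen, hprod⟩ := ih hl' hlt
      refine ⟨rootReflection ρ :: l', ?_, by simp [hlen], by simp [hprod, mul_assoc]⟩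
      exact fun s hs ↦ (List.mem_cons.1 hs).elim (· ▸ ⟨ρ, hρ, rfl⟩) (hl's s)
    · -- `rootReflection ρ` makes no positive root negative except `ρ`
      have hρeq : l.prod η = ρ := by
        by_contra hne
        have := hΔ.inner_rootReflection_pos hΦ hx hρ hlη hgt hne
        simp only [List.prod_cons, LinearIsometryEquiv.coe_mul, Function.comp_apply] at hneg
        linarith
      refine ⟨l, hl', by simp, ?_⟩
      rw [List.prod_cons, ← hρeq, ← mul_rootReflection_mul_inv, inv_mul_cancel_right,
        mul_assoc, rootReflection_mul_self, mul_one]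

lemma IsSimpleSystem.list_prod_eq_one_of_apply_eq_self (hΦ : IsUnitRootSystem Φ)
    (hx : ∀ α ∈ Φ, ⟪x, α⟫ ≠ 0) (hΔ : IsSimpleSystem Φ x Δ) {l : List (E ≃ₗᵢ[ℝ] E)}
    (hl : ∀ s ∈ l, s ∈ rootReflection '' (Δ : Set E)) (hfix : l.prod x = x) : l.prod = 1 := by
  induction hn : l.length using Nat.strong_induction_on generalizing l with
  | _ n ih =>
  rcases l.eq_nil_or_concat' with rfl | ⟨l₁, s, rfl⟩
  · rfl
  obtain ⟨δ, hδ, rfl⟩ := hl s (by simp)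
  have hprod : (l₁ ++ [rootReflection δ]).prod = l₁.prod * rootReflection δ := by simp
  rw [hprod] at hfix ⊢
  have hneg : ⟪x, l₁.prod δ⟫ < 0 := by
    have h := (l₁.prod * rootReflection δ).inner_map_map x δ
    rw [hfix, LinearIsometryEquiv.coe_mul, Function.comp_apply, rootReflection_self, map_neg,
      inner_neg_right] at h
    linarith [(hΔ.mem_pos δ hδ).2]
  obtain ⟨l', hl's, hlen, hl'prod⟩ := hΔ.exists_list_prod_eq_mul_rootReflection hΦ hx
    (hΔ.mem_pos δ hδ).1 (hΔ.mem_pos δ hδ).2 (fun s hs ↦ hl s (by simp [hs])) hneg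
  rw [← hl'prod] at hfix ⊢
  exact ih _ (by simp [← hn, ← hlen]) hl's hfix rfl

theorem IsUnitRootSystem.eq_one_of_apply_eq_self (hΦ : IsUnitRootSystem Φ)
    (hx : ∀ α ∈ Φ, ⟪x, α⟫ ≠ 0) {w : E ≃ₗᵢ[ℝ] E}
    (hw : w ∈ Subgroup.closure (rootReflection '' (Φ : Set E))) (hwx : w x = x) : w = 1 := by
  obtain ⟨Δ, hΔ⟩ := exists_isSimpleSystem Φ x
  set S := rootReflection '' (Δ : Set E)
  have hle : Subgroup.closure (rootReflection '' (Φ : Set E)) ≤ Subgroup.closure S := by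
    rw [Subgroup.closure_le]
    rintro _ ⟨α, hα, rfl⟩
    rcases (hx α hα).lt_or_gt with hlt | hgt
    · rw [← rootReflection_neg]
      exact hΔ.rootReflection_mem_closure hΦ hx (hΦ.neg_mem hα) (by rw [inner_neg_right]; linarith)
    · exact hΔ.rootReflection_mem_closure hΦ hx hα hgt
  have hw' : w ∈ Submonoid.closure (S ∪ S⁻¹) := by
    rw [← Subgroup.closure_toSubmonoid]
    exact hle hw
  obtain ⟨l, hl, rfl⟩ := Submonoid.exists_list_of_mem_closure hw'
  refine hΔ.list_prod_eq_one_of_apply_eq_self hΦ hx (fun s hs ↦ ?_) hwx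
  obtain hs | ⟨δ, hδ, hδs⟩ := hl s hs
  · exact hs
  · exact ⟨δ, hδ, by rw [← inv_inv s, ← hδs, rootReflection_inv]⟩

end SimpleSystem

section WordLength

variable {G : Type*} [Group G] {T : Set G}

lemma wordLength_list_prod_le {l : List G} (hl : ∀ t ∈ l, t ∈ T) :
    wordLength T l.prod ≤ l.length := by
  refine Nat.sInf_le ?_
  exact ⟨l, hl, rfl, rfl⟩

lemma exists_list_length_eq_wordLength {w : G}
    (h : ∃ l : List G, (∀ t ∈ l, t ∈ T) ∧ l.prod = w) :
    ∃ l : List G, (∀ t ∈ l, t ∈ T) ∧ l.length = wordLength T w ∧ l.prod = w := by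
  obtain ⟨l, hl, rfl⟩ := h
  exact Nat.sInf_mem
    (s := {n | ∃ l' : List G, (∀ t ∈ l', t ∈ T) ∧ l'.length = n ∧ l'.prod = l.prod})
    ⟨l.length, l, hl, rfl, rfl⟩

end WordLength

section FiniteReflectionGroup

variable {E : Type*} [NormedAddCommGroup E] [InnerProductSpace ℝ E] (W : Subgroup (E ≃ₗᵢ[ℝ] E))

def unitRoots : Set E := {α | ‖α‖ = 1 ∧ rootReflection α ∈ W}

lemma finite_unitRoots [Finite W] : (unitRoots W).Finite := by
  refine Set.Finite.of_finite_fibers rootReflection ((W : Set _).toFinite.subset ?_) ?_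
  · rintro _ ⟨α, hα, rfl⟩
    exact hα.2
  · rintro _ ⟨α, hα, rfl⟩
    refine (Set.toFinite {α, -α}).subset ?_
    rintro β ⟨hβ, hβα⟩
    exact eq_or_eq_neg_of_rootReflection_eq hα.1 hβ.1 hβα.symm

lemma isUnitRootSystem_unitRoots [Finite W] : IsUnitRootSystem (finite_unitRoots W).toFinset where
  norm_eq_one α hα := ((Set.Finite.mem_toFinset _).1 hα).1
  rootReflection_mem α hα β hβ := by
    simp only [Set.Finite.mem_toFinset] at hα hβ ⊢
    refine ⟨by rw [LinearIsometryEquiv.norm_map, hβ.1], ?_⟩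
    rw [← mul_rootReflection_mul_inv]
    exact mul_mem (mul_mem hα.2 hβ.2) (inv_mem hα.2)

lemma le_closure_unitRoots
    (hgen : Subgroup.closure {x : W | IsHypReflection (x : E ≃ₗᵢ[ℝ] E)} = ⊤) :
    W ≤ Subgroup.closure (rootReflection '' unitRoots W) := by
  calc W = (Subgroup.closure {x : W | IsHypReflection (x : E ≃ₗᵢ[ℝ] E)}).map W.subtype := by
        rw [hgen, ← MonoidHom.range_eq_map, Subgroup.range_subtype]
    _ = _ := MonoidHom.map_closure _ _
    _ ≤ _ := Subgroup.closure_mono ?_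
  rintro _ ⟨t, ht, rfl⟩
  obtain ⟨α, hα, htα⟩ := IsHypReflection.exists_norm_eq_one ht
  exact ⟨α, ⟨hα, htα ▸ t.2⟩, htα.symm⟩

variable [FiniteDimensional ℝ E] [Finite W]

lemma exists_mem_unitRoots_mem_movedSpace
    (hgen : Subgroup.closure {x : W | IsHypReflection (x : E ≃ₗᵢ[ℝ] E)} = ⊤)
    {w : E ≃ₗᵢ[ℝ] E} (hwW : w ∈ W) (hw : w ≠ 1) :
    ∃ α ∈ unitRoots W, α ∈ movedSpace w := by
  by_contra! h
  set Φ := (finite_unitRoots W).toFinset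
  obtain ⟨x, hxF, hx⟩ := Module.Dual.exists_forall_mem_ne_zero_of_forall_exists (fixedSpace w)
    (fun α : Φ ↦ innerₛₗ ℝ (α : E)) fun α ↦ by
      by_contra! hα
      refine h α ((Set.Finite.mem_toFinset _).1 α.2) ?_
      rw [← orthogonal_fixedSpace, mem_orthogonal']
      exact hα
  refine hw ((isUnitRootSystem_unitRoots W).eq_one_of_apply_eq_self
    (fun α hα ↦ real_inner_comm α x ▸ hx ⟨α, hα⟩) ?_ (mem_fixedSpace.1 hxF))
  rw [Set.Finite.coe_toFinset]
  exact le_closure_unitRoots W hgen hwW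

lemma exists_list_length_le_finrank_movedSpace
    (hgen : Subgroup.closure {x : W | IsHypReflection (x : E ≃ₗᵢ[ℝ] E)} = ⊤) (w : W) :
    ∃ l : List W, (∀ t ∈ l, IsHypReflection (t : E ≃ₗᵢ[ℝ] E)) ∧
      l.length ≤ finrank ℝ (movedSpace (w : E ≃ₗᵢ[ℝ] E)) ∧ l.prod = w := by
  induction hn : finrank ℝ (movedSpace (w : E ≃ₗᵢ[ℝ] E)) using Nat.strong_induction_on
    generalizing w with
  | _ n ih =>
  obtain rfl | hw := eq_or_ne w 1
  · exact ⟨[], by simp, by simp, rfl⟩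
  obtain ⟨α, hα, hαw⟩ := exists_mem_unitRoots_mem_movedSpace W hgen w.2 (by simpa using hw)
  have hα0 : α ≠ 0 := norm_ne_zero_iff.1 (by rw [hα.1]; exact one_ne_zero)
  set t : W := ⟨rootReflection α, hα.2⟩
  have hlt : finrank ℝ (movedSpace (t * w : E ≃ₗᵢ[ℝ] E)) < n :=
    hn ▸ finrank_movedSpace_rootReflection_mul_lt hα0 hαw
  obtain ⟨l, hl, hlen, hprod⟩ := ih _ hlt (t * w) rfl
  refine ⟨t :: l, List.forall_mem_cons.2 ⟨⟨α, hα0, rfl⟩, hl⟩, by simp; omega, ?_⟩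
  have htt : t * t = 1 := Subtype.ext (rootReflection_mul_self α)
  rw [List.prod_cons, hprod, ← mul_assoc, htt, one_mul]

theorem wordLength_eq_finrank_movedSpace
    (hgen : Subgroup.closure {x : W | IsHypReflection (x : E ≃ₗᵢ[ℝ] E)} = ⊤) (w : W) :
    wordLength {x : W | IsHypReflection (x : E ≃ₗᵢ[ℝ] E)} w =
      finrank ℝ (movedSpace (w : E ≃ₗᵢ[ℝ] E)) := by
  obtain ⟨l, hl, hlen, hprod⟩ := exists_list_length_le_finrank_movedSpace W hgen w
  obtain ⟨l', hl', hlen', hprod'⟩ :=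
    exists_list_length_eq_wordLength (T := {x : W | IsHypReflection (x : E ≃ₗᵢ[ℝ] E)})
      ⟨l, hl, hprod⟩
  refine le_antisymm ?_ ?_
  · rw [← hprod] at hlen ⊢
    exact (wordLength_list_prod_le hl).trans hlen
  rw [← hlen', ← hprod', Subgroup.val_list_prod, ← List.length_map Subtype.val]
  exact finrank_movedSpace_list_prod_le (by simpa using hl')

end FiniteReflectionGroup

theorem reflections_below_commuting_factors_commute_general (W : Subgroup (V ≃ₗᵢ[ℝ] V)) [Finite W]
    (hgen : Subgroup.closure {x : W | IsHypReflection (x : V ≃ₗᵢ[ℝ] V)} = ⊤)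
    (u v : W) (hcomm : u * v = v * u)
    (hadd : wordLength {x : W | IsHypReflection (x : V ≃ₗᵢ[ℝ] V)} (u * v) =
      wordLength {x : W | IsHypReflection (x : V ≃ₗᵢ[ℝ] V)} u +
        wordLength {x : W | IsHypReflection (x : V ≃ₗᵢ[ℝ] V)} v)
    (t t' : W)
    (htu : wordLength {x : W | IsHypReflection (x : V ≃ₗᵢ[ℝ] V)} t +
      wordLength {x : W | IsHypReflection (x : V ≃ₗᵢ[ℝ] V)} (t⁻¹ * u) =
        wordLength {x : W | IsHypReflection (x : V ≃ₗᵢ[ℝ] V)} u)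
    (ht'v : wordLength {x : W | IsHypReflection (x : V ≃ₗᵢ[ℝ] V)} t' +
      wordLength {x : W | IsHypReflection (x : V ≃ₗᵢ[ℝ] V)} (t'⁻¹ * v) =
        wordLength {x : W | IsHypReflection (x : V ≃ₗᵢ[ℝ] V)} v) :
    Commute t t' := by
  simp only [wordLength_eq_finrank_movedSpace W hgen, Subgroup.coe_mul, Subgroup.coe_inv]
    at hadd htu ht'v
  have htu' := movedSpace_le_of_finrank_add_finrank_inv_mul htu
  have ht'v' := movedSpace_le_of_finrank_add_finrank_inv_mul ht'v
  have huv : movedSpace (u : V ≃ₗᵢ[ℝ] V) ⟂ movedSpace (v : V ≃ₗᵢ[ℝ] V) :=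
    isOrtho_movedSpace_of_commute (congrArg Subtype.val hcomm)
      (inf_movedSpace_eq_bot_of_finrank_mul_eq_add hadd)
  exact Subtype.ext (commute_of_isOrtho_movedSpace (huv.mono htu' ht'v'))

/-- Let `W` be a finite real reflection group on `V` and `u, v ∈ W` with `uv = vu` and
`ℓ_T(uv) = ℓ_T(u) + ℓ_T(v)`. If `t, t'` are reflections with `t ≤_T u` and `t' ≤_T v`,
then `t` and `t'` commute. -/
theorem reflections_below_commuting_factors_commute (W : Subgroup (V ≃ₗᵢ[ℝ] V)) [Finite W]
    (hgen : Subgroup.closure {x : W | IsHypReflection (x : V ≃ₗᵢ[ℝ] V)} = ⊤)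
    (u v : W) (hcomm : u * v = v * u)
    (hadd : wordLength {x : W | IsHypReflection (x : V ≃ₗᵢ[ℝ] V)} (u * v) =
      wordLength {x : W | IsHypReflection (x : V ≃ₗᵢ[ℝ] V)} u +
        wordLength {x : W | IsHypReflection (x : V ≃ₗᵢ[ℝ] V)} v)
    (t t' : W)
    (ht : IsHypReflection (t : V ≃ₗᵢ[ℝ] V)) (ht' : IsHypReflection (t' : V ≃ₗᵢ[ℝ] V))
    (htu : wordLength {x : W | IsHypReflection (x : V ≃ₗᵢ[ℝ] V)} t +
      wordLength {x : W | IsHypReflection (x : V ≃ₗᵢ[ℝ] V)} (t⁻¹ * u) =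
        wordLength {x : W | IsHypReflection (x : V ≃ₗᵢ[ℝ] V)} u)
    (ht'v : wordLength {x : W | IsHypReflection (x : V ≃ₗᵢ[ℝ] V)} t' +
      wordLength {x : W | IsHypReflection (x : V ≃ₗᵢ[ℝ] V)} (t'⁻¹ * v) =
        wordLength {x : W | IsHypReflection (x : V ≃ₗᵢ[ℝ] V)} v) :
    Commute t t' :=
  reflections_below_commuting_factors_commute_general W hgen u v hcomm hadd t t' htu ht'v
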